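/- Let D_k(t) = det(g^{(i+j−2)}(t))_{1≤i,j≤k} where g(t) = ∫₀¹ e^{−tx} dx. Then D_k'(0)/D_k(0) = −k/2. -/

import Mathlib

open MeasureTheory intervalIntegral

noncomputable def gFun : ℝ → ℝ := fun t => ∫ x in (0:ℝ)..1, Real.exp (-(t * x))

noncomputable def Dk (k : ℕ) : ℝ → ℝ := fun t =>
  Matrix.det (Matrix.of fun i j : Fin k => iteratedDeriv ((i : ℕ) + (j : ℕ)) gFun t)

/-!
On `[0, 1]`, `g⁽ⁱ⁺ʲ⁾(t)` is the inner product of `(-x)ⁱ` and `(-x)ʲ` for the weight `e^{-tx}`, so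
the Hankel matrix `H(t)` is a Gram matrix; in particular it is positive definite and `D_k(0) > 0`.
Reflecting `x ↦ 1 - x` gives `H(-t) = eᵗ • E H(t) Eᵀ`, where `E` expresses `(x - 1)ⁱ` in the basis
`(-x)ᵃ`; `E` is triangular with diagonal `±1`, so `D_k(-t) = e^{kt} D_k(t)`. Differentiating this
at `0` gives `-D_k'(0) = k D_k(0) + D_k'(0)`.
-/

open Matrix Set Real ProbabilityTheory

theorem linearIndependent_domRestrict_pow_comp {s : Set ℝ} (hs : s.Infinite) {f : ℝ → ℝ}
    (hf : InjOn f s) (k : ℕ) :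
    LinearIndependent ℝ fun i : Fin k => s.domRestrict fun x => f x ^ (i : ℕ) := by
  rw [Fintype.linearIndependent_iff]
  intro g hg
  let y : Fin k → s := hs.natEmbedding s ∘ Fin.val
  have hy : Function.Injective fun j => f (y j) := fun j j' h =>
    Fin.val_injective ((hs.natEmbedding s).injective
      (Subtype.val_injective (hf (y j).2 (y j').2 h)))
  have hV : vandermonde (fun j => f (y j)) *ᵥ g = 0 := by
    ext j
    simpa [mulVec, dotProduct, mul_comm] using congrFun hg (y j)
  exact congrFun (eq_zero_of_mulVec_eq_zero (det_vandermonde_ne_zero_iff.mpr hy) hV)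

theorem differentiable_det_of_entries {𝕜 n : Type*} [NontriviallyNormedField 𝕜] [Fintype n]
    [DecidableEq n] {A : 𝕜 → Matrix n n 𝕜} (hA : ∀ i j, Differentiable 𝕜 fun t => A t i j) :
    Differentiable 𝕜 fun t => (A t).det := by
  simp only [det_apply]
  fun_prop

theorem deriv_zero_of_comp_neg_eq_exp_mul {f : ℝ → ℝ} {c : ℝ}
    (hf : DifferentiableAt ℝ f 0) (h : ∀ t, f (-t) = exp (c * t) * f t) :
    deriv f 0 = -(c / 2 * f 0) := by
  have hderiv := congrArg (deriv · 0) (funext h)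
  simp only [deriv_comp_neg, neg_zero] at hderiv
  have hexp : HasDerivAt (fun t => exp (c * t)) c 0 := by
    simpa using ((hasDerivAt_id (0 : ℝ)).const_mul c).exp
  rw [deriv_fun_mul hexp.differentiableAt hf, hexp.deriv, mul_zero, exp_zero, one_mul] at hderiv
  linarith

noncomputable def intervalGram {ι : Type*} (a b : ℝ) (w : ℝ → ℝ) (p : ι → ℝ → ℝ) :
    Matrix ι ι ℝ :=
  of fun i j => ∫ x in a..b, p i x * p j x * w x

section IntervalGram

variable {ι κ : Type*} {a b : ℝ} {w : ℝ → ℝ} {p : ι → ℝ → ℝ}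

theorem intervalGram_reflect : intervalGram a b w p =
    intervalGram a b (fun x => w (a + b - x)) fun i x => p i (a + b - x) := by
  ext i j
  simp only [intervalGram, of_apply]
  rw [integral_comp_sub_left (fun x => p i x * p j x * w x), add_sub_cancel_right,
    add_sub_cancel_left]

theorem intervalGram_const_mul_weight (c : ℝ) :
    intervalGram a b (fun x => c * w x) p = c • intervalGram a b w p := by
  ext i j
  simp only [intervalGram, of_apply, Matrix.smul_apply, smul_eq_mul,
    ← intervalIntegral.integral_const_mul]
  congr 1 with x
  ring

theorem intervalGram_linearCombination [Fintype ι] (E : Matrix κ ι ℝ)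
    (hp : ∀ i j, IntervalIntegrable (fun x => p i x * p j x * w x) volume a b) :
    intervalGram a b w (fun l x => ∑ i, E l i * p i x) = E * intervalGram a b w p * Eᵀ := by
  ext l m
  have expand : ∀ x, (∑ i, E l i * p i x) * (∑ j, E m j * p j x) * w x =
      ∑ i, ∑ j, E l i * E m j * (p i x * p j x * w x) := by
    intro x
    rw [Finset.sum_mul_sum, Finset.sum_mul]
    refine Finset.sum_congr rfl fun i _ => ?_
    rw [Finset.sum_mul]
    exact Finset.sum_congr rfl fun j _ => by ring
  calc ∫ x in a..b, (∑ i, E l i * p i x) * (∑ j, E m j * p j x) * w x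
      = ∑ i, ∑ j, ∫ x in a..b, E l i * E m j * (p i x * p j x * w x) := by
        simp only [expand]
        rw [integral_finsetSum (f := fun i x => ∑ j, E l i * E m j * (p i x * p j x * w x))
          fun i _ => by simpa only [Finset.sum_fn] using
            IntervalIntegrable.sum _ fun j _ => (hp i j).const_mul (E l i * E m j)]
        exact Finset.sum_congr rfl fun i _ => integral_finsetSum fun j _ => (hp i j).const_mul _
    _ = (E * intervalGram a b w p * Eᵀ) l m := by
        simp only [intervalGram, mul_apply, transpose_apply, of_apply, Finset.sum_mul,
          intervalIntegral.integral_const_mul]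
        rw [Finset.sum_comm]
        exact Finset.sum_congr rfl fun i _ => Finset.sum_congr rfl fun j _ => by ring

theorem dotProduct_intervalGram_mulVec [Fintype ι] (v : ι → ℝ)
    (hp : ∀ i j, IntervalIntegrable (fun x => p i x * p j x * w x) volume a b) :
    v ⬝ᵥ intervalGram a b w p *ᵥ v = ∫ x in a..b, (∑ i, v i * p i x) ^ 2 * w x := by
  have h := congrFun₂ (intervalGram_linearCombination (replicateRow Unit v) hp) () ()
  simp only [intervalGram, of_apply, replicateRow_apply] at h
  simp only [sq]
  rw [h]
  simp only [intervalGram, of_apply, mul_apply, transpose_apply, replicateRow_apply, dotProduct,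
    mulVec, Finset.mul_sum, Finset.sum_mul]
  rw [Finset.sum_comm]
  exact Finset.sum_congr rfl fun i _ => Finset.sum_congr rfl fun j _ => by ring

theorem intervalGram_posDef [Fintype ι] (hab : a < b) (hw : Continuous w)
    (hw_pos : ∀ x ∈ Icc a b, 0 < w x) (hp : ∀ i, Continuous (p i))
    (hind : LinearIndependent ℝ fun i => (Icc a b).domRestrict (p i)) :
    (intervalGram a b w p).PosDef := by
  rw [posDef_iff_dotProduct_mulVec]
  refine ⟨?_, fun v hv => ?_⟩
  · ext i j
    simp only [conjTranspose_apply, star_trivial, intervalGram, of_apply, mul_comm (p i _)]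
  · have hint : ∀ i j, IntervalIntegrable (fun x => p i x * p j x * w x) volume a b :=
      fun i j => (((hp i).mul (hp j)).mul hw).intervalIntegrable a b
    obtain ⟨c, hc, hvc⟩ : ∃ c ∈ Icc a b, ∑ i, v i * p i c ≠ 0 := by
      by_contra! h
      exact hv (funext (Fintype.linearIndependent_iff.mp hind v (funext fun x => by
        simpa [Set.domRestrict] using h x x.2)))
    rw [star_trivial, dotProduct_intervalGram_mulVec v hint]
    refine integral_pos hab ?_ (fun x hx => ?_) ⟨c, hc, ?_⟩
    · exact ((continuous_finsetSum _ fun i _ => continuous_const.mul (hp i)).pow 2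
        |>.mul hw).continuousOn
    · exact mul_nonneg (sq_nonneg _) (hw_pos x (Ioc_subset_Icc_self hx)).le
    · exact mul_pos (pow_two_pos_of_ne_zero hvc) (hw_pos c hc)

end IntervalGram

noncomputable def signedPascal (k : ℕ) : Matrix (Fin k) (Fin k) ℝ :=
  of fun i a => (-1) ^ (i : ℕ) * ((i : ℕ).choose a : ℝ)

theorem sub_one_pow_eq_sum_signedPascal {k : ℕ} (i : Fin k) (x : ℝ) :
    (x - 1) ^ (i : ℕ) = ∑ a, signedPascal k i a * (-x) ^ (a : ℕ) := by
  have binomial : (x - 1) ^ (i : ℕ) =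
      ∑ a ∈ Finset.range k, (-1) ^ (i : ℕ) * ((i : ℕ).choose a : ℝ) * (-x) ^ a := by
    rw [← Finset.sum_subset (Finset.range_subset_range.mpr i.isLt) fun a _ ha => by
      rw [Nat.choose_eq_zero_of_lt (by simpa using ha), Nat.cast_zero, mul_zero, zero_mul]]
    rw [show x - 1 = -(-x + 1) by ring, neg_pow, add_pow, Finset.mul_sum]
    exact Finset.sum_congr rfl fun a _ => by ring
  rw [binomial, ← Fin.sum_univ_eq_sum_range]
  rfl

theorem det_signedPascal_mul_self (k : ℕ) :
    (signedPascal k).det * (signedPascal k).det = 1 := by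
  have lower : (signedPascal k).IsLowerTriangular := fun i a hia => by
    simp [signedPascal, Nat.choose_eq_zero_of_lt (show (i : ℕ) < a from hia)]
  rw [det_of_isLowerTriangular _ lower, ← Finset.prod_mul_distrib]
  refine Finset.prod_eq_one fun i _ => ?_
  simp [signedPascal, ← pow_add, ← two_mul]

theorem gFun_eq_mgf : gFun = mgf (fun x => -x) (volume.restrict (Ioc 0 1)) := by
  ext t
  simp [gFun, mgf, integral_of_le zero_le_one]

theorem interior_integrableExpSet_neg_Ioc :
    interior (integrableExpSet (fun x : ℝ => -x) (volume.restrict (Ioc 0 1))) = univ := by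
  rw [interior_eq_univ, eq_univ_iff_forall]
  intro t
  exact (by fun_prop : Continuous fun x : ℝ => exp (t * -x)).integrableOn_Ioc

theorem iteratedDeriv_gFun (n : ℕ) (t : ℝ) :
    iteratedDeriv n gFun t = ∫ x in (0 : ℝ)..1, (-x) ^ n * exp (-(t * x)) := by
  rw [gFun_eq_mgf, iteratedDeriv_mgf (by simp [interior_integrableExpSet_neg_Ioc]),
    integral_of_le zero_le_one]
  simp

theorem differentiable_iteratedDeriv_gFun (n : ℕ) : Differentiable ℝ (iteratedDeriv n gFun) := by
  rw [gFun_eq_mgf]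
  exact fun t => (analyticAt_iteratedDeriv_mgf
    (by simp [interior_integrableExpSet_neg_Ioc]) n).differentiableAt

noncomputable def momentGram (k : ℕ) (t : ℝ) : Matrix (Fin k) (Fin k) ℝ :=
  intervalGram 0 1 (fun x => exp (-(t * x))) fun i x => (-x) ^ (i : ℕ)

theorem Dk_eq_det_momentGram (k : ℕ) (t : ℝ) : Dk k t = (momentGram k t).det := by
  simp only [Dk, momentGram, intervalGram, iteratedDeriv_gFun, pow_add]

theorem momentGram_neg (k : ℕ) (t : ℝ) :
    momentGram k (-t) = exp t • (signedPascal k * momentGram k t * (signedPascal k)ᵀ) := by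
  have weight : (fun x => exp (-(-t * (0 + 1 - x)))) = fun x => exp t * exp (-(t * x)) := by
    ext x
    rw [← exp_add]
    ring_nf
  have basis : (fun (i : Fin k) x => (-(0 + 1 - x)) ^ (i : ℕ)) =
      fun i x => ∑ a, signedPascal k i a * (-x) ^ (a : ℕ) := by
    ext i x
    rw [← sub_one_pow_eq_sum_signedPascal]
    ring_nf
  rw [momentGram, intervalGram_reflect, weight, basis, intervalGram_const_mul_weight,
    intervalGram_linearCombination _ fun i j => by apply Continuous.intervalIntegrable; fun_prop]
  rfl

theorem momentGram_posDef (k : ℕ) (t : ℝ) : (momentGram k t).PosDef :=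
  intervalGram_posDef zero_lt_one (by fun_prop) (fun x _ => exp_pos _) (fun i => by fun_prop)
    (linearIndependent_domRestrict_pow_comp (Icc_infinite zero_lt_one) neg_injective.injOn k)

theorem Dk_neg (k : ℕ) (t : ℝ) : Dk k (-t) = exp (k * t) * Dk k t := by
  rw [Dk_eq_det_momentGram, momentGram_neg, det_smul, det_mul, det_mul, det_transpose,
    ← Dk_eq_det_momentGram, Fintype.card_fin, ← exp_nat_mul]
  linear_combination exp (k * t) * Dk k t * det_signedPascal_mul_self k

theorem differentiable_Dk (k : ℕ) : Differentiable ℝ (Dk k) :=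
  differentiable_det_of_entries fun _ _ => differentiable_iteratedDeriv_gFun _

theorem Dk_logDeriv_at_zero_general (k : ℕ) :
    deriv (Dk k) 0 / Dk k 0 = -(k : ℝ) / 2 := by
  have hD₀ : Dk k 0 ≠ 0 := by
    rw [Dk_eq_det_momentGram]
    exact (momentGram_posDef k 0).det_pos.ne'
  rw [deriv_zero_of_comp_neg_eq_exp_mul (differentiable_Dk k 0) (Dk_neg k)]
  field_simp

theorem Dk_logDeriv_at_zero (k : ℕ) (hk : 1 ≤ k) :
    deriv (Dk k) 0 / Dk k 0 = -(k : ℝ) / 2 :=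
  Dk_logDeriv_at_zero_general k
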